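/- Let L > 1, c ≥ 0, C ≥ 0, τ ≥ 0 and κ ∈ ℝ. There exist ε > 0 and C′ > 0, depending only on L, c, C, τ, κ, such that the following holds for every q₁ ∈ (0,ε]. Set q_j := q₁/(1 + q₁(j−1)). Let (γ_j)_{j≥1} and (M_j)_{j≥1} be real sequences with |γ_j − (ln L)/(2π)| ≤ c L^{−j/4} and |M_j| ≤ C(q_j L^{−j/4} + τ q₁ (1 + q₁(j−1))^{−3/2}) for all j ≥ 1, let Z₁ ∈ ℝ, and define recursively Z_{j+1} := L² e^{−πγ_j}(1 + κ q_j + M_j) Z_j. Then there exists a constant c_κ (independent of j) with |c_κ| ≤ C′(q₁ + τ), and for every j ≥ 1 reals r_j with |r_j| ≤ C′(q₁ + τ)/√(1 + q₁(j−1)), such that Z_{j+1} = Z₁ · L^{3j/2} · (1 + q₁ j)^{κ} · e^{g_j + c_κ + r_j}, where g_j := −π Σ_{k=1}^j (γ_k − (ln L)/(2π)). -/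

import Mathlib

/-!
Taking logarithms, `log Z_{j+1} - log Z₁` is the sum over `k ≤ j` of
`2 log L - π γ_k + log (1 + κ q_k + M_k)`. Since `1 + q_k = (1 + q₁ k) / (1 + q₁ (k - 1))`,
the main part `κ log (1 + q_k)` telescopes to `κ log (1 + q₁ j)`, and the remainder
`e_k = log (1 + κ q_k + M_k) - κ log (1 + q_k)` (`logRemainder`) is `O(|M_k| + q_k²)`, i.e.
`O(q₁ L^{-k/4} + (q₁ + τ) q₁ (1 + q₁ (k - 1))^{-3/2})`. The first term has a geometric tail; the
second is dominated by the differences `4 ((1 + q₁ (k - 1))^{-1/2} - (1 + q₁ k)^{-1/2})`. So the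
tails of `∑ e_k` are `O((q₁ + τ) / √(1 + q₁ j))`: the series converges to `c_κ`, and `r_j` is
minus its tail.
-/

open Finset Filter Topology Real

lemma abs_log_one_add_sub_self_le {x : ℝ} (hx : -1 / 2 ≤ x) : |log (1 + x) - x| ≤ 2 * x ^ 2 := by
  have hpos : 0 < 1 + x := by linarith
  have upper : log (1 + x) ≤ x := by linarith [log_le_sub_one_of_pos hpos]
  have lower : x - 2 * x ^ 2 ≤ log (1 + x) := by
    refine le_trans ?_ (one_sub_inv_le_log_of_pos hpos)
    rw [show 1 - (1 + x)⁻¹ = x / (1 + x) by field_simp; ring, le_div_iff₀ hpos]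
    nlinarith [sq_nonneg x]
  rw [abs_le]
  constructor <;> nlinarith [sq_nonneg x]

lemma abs_log_one_add_mul_add_sub_le {κ q m : ℝ} (hq : -1 / 2 ≤ q) (hy : -1 / 2 ≤ κ * q + m)
    (hm : |m| ≤ 1 / 2) :
    |log (1 + κ * q + m) - κ * log (1 + q)| ≤ 3 * |m| + (4 * κ ^ 2 + 2 * |κ|) * q ^ 2 := by
  have hy' := abs_log_one_add_sub_self_le hy
  have hq' := abs_log_one_add_sub_self_le hq
  have hsplit : log (1 + κ * q + m) - κ * log (1 + q)
      = (log (1 + (κ * q + m)) - (κ * q + m)) + m - κ * (log (1 + q) - q) := by ring_nf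
  have hsq : (κ * q + m) ^ 2 ≤ 2 * κ ^ 2 * q ^ 2 + |m| := by
    nlinarith [sq_nonneg (κ * q - m), sq_abs m, abs_nonneg m]
  calc |log (1 + κ * q + m) - κ * log (1 + q)|
      ≤ |log (1 + (κ * q + m)) - (κ * q + m)| + |m| + |κ| * |log (1 + q) - q| := by
        rw [hsplit, ← abs_mul]
        exact (abs_sub _ _).trans (add_le_add_left (abs_add_le _ _) _)
    _ ≤ 2 * (2 * κ ^ 2 * q ^ 2 + |m|) + |m| + |κ| * (2 * q ^ 2) := by
        gcongr
        exact hy'.trans (by gcongr)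
    _ = 3 * |m| + (4 * κ ^ 2 + 2 * |κ|) * q ^ 2 := by ring

lemma rpow_neg_three_halves {x : ℝ} (hx : 0 < x) : x ^ (-(3 : ℝ) / 2) = (x * √x)⁻¹ := by
  rw [show -(3 : ℝ) / 2 = -(1 + 1 / 2) by norm_num, rpow_neg hx.le, rpow_add hx, rpow_one,
    ← sqrt_eq_rpow]

lemma mul_rpow_neg_three_halves_le {x q : ℝ} (hx : 0 < x) (hq0 : 0 ≤ q) (hqx : q ≤ x) :
    q * x ^ (-(3 : ℝ) / 2) ≤ 4 / √x - 4 / √(x + q) := by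
  set u := √x
  set v := √(x + q)
  have hu : 0 < u := sqrt_pos.mpr hx
  have hv : 0 < v := sqrt_pos.mpr (by linarith)
  have hu2 : u ^ 2 = x := sq_sqrt hx.le
  have hv2 : v ^ 2 = x + q := sq_sqrt (by linarith)
  have huv : u ≤ v := sqrt_le_sqrt (by linarith)
  calc q * x ^ (-(3 : ℝ) / 2) = 4 * q / (4 * (x * u)) := by
        rw [rpow_neg_three_halves hx]; field_simp; rfl
    _ ≤ 4 * q / (u * v * (u + v)) := by
        refine div_le_div_of_nonneg_left (by positivity) (by positivity) ?_
        -- `v (u + v) ≤ 2 v² ≤ 4 x` because `q ≤ x`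
        nlinarith [mul_le_mul_of_nonneg_left huv hv.le, mul_pos hu hv]
    _ = 4 / u - 4 / v := by
        field_simp
        linear_combination hu2 - hv2

lemma sum_Ioc_le_sub_of_le_sub {f g : ℕ → ℝ} (h : ∀ k, f (k + 1) ≤ g k - g (k + 1)) {j m : ℕ}
    (hjm : j ≤ m) : ∑ k ∈ Ioc j m, f k ≤ g j - g m := by
  induction m, hjm using Nat.le_induction with
  | base => simp
  | succ m hjm ih => rw [sum_Ioc_succ_top hjm]; linarith [h m]

lemma sum_Ioc_mul_rpow_neg_three_halves_le {q : ℝ} (hq0 : 0 ≤ q) (hq1 : q ≤ 1) {j m : ℕ}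
    (hjm : j ≤ m) :
    ∑ k ∈ Ioc j m, q * (1 + q * ((k : ℝ) - 1)) ^ (-(3 : ℝ) / 2) ≤ 4 / √(1 + q * j) := by
  have step : ∀ k : ℕ, q * (1 + q * (((k + 1 : ℕ) : ℝ) - 1)) ^ (-(3 : ℝ) / 2)
      ≤ 4 / √(1 + q * k) - 4 / √(1 + q * (k + 1 : ℕ)) := by
    intro k
    have hk : (0 : ℝ) ≤ q * k := by positivity
    have := mul_rpow_neg_three_halves_le (x := 1 + q * k) (by positivity) hq0 (by linarith)
    rwa [Nat.cast_add_one, add_sub_cancel_right, mul_add_one, ← add_assoc]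
  calc _ ≤ 4 / √(1 + q * j) - 4 / √(1 + q * m) :=
        sum_Ioc_le_sub_of_le_sub (g := fun k : ℕ => 4 / √(1 + q * k)) step hjm
    _ ≤ 4 / √(1 + q * j) := sub_le_self _ (by positivity)

lemma succ_mul_pow_le_inv_one_sub {ρ : ℝ} (hρ0 : 0 ≤ ρ) (hρ1 : ρ < 1) (n : ℕ) :
    (n + 1) * ρ ^ n ≤ (1 - ρ)⁻¹ :=
  calc (n + 1) * ρ ^ n = ∑ _i ∈ range (n + 1), ρ ^ n := by simp
    _ ≤ ∑ i ∈ range (n + 1), ρ ^ i :=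
        sum_le_sum fun i hi =>
          pow_le_pow_of_le_one hρ0 hρ1.le (Nat.lt_succ_iff.mp (mem_range.mp hi))
    _ ≤ ρ ^ 0 / (1 - ρ) := by rw [range_eq_Ico]; exact geom_sum_Ico_le_of_lt_one hρ0 hρ1
    _ = (1 - ρ)⁻¹ := by simp

lemma sum_Ioc_pow_le {ρ q : ℝ} (hρ0 : 0 ≤ ρ) (hρ1 : ρ < 1) (hq0 : 0 ≤ q) (hq1 : q ≤ 1)
    (j m : ℕ) : ∑ k ∈ Ioc j m, ρ ^ k ≤ (1 - ρ)⁻¹ ^ 2 / √(1 + q * j) := by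
  have hj : (0 : ℝ) < j + 1 := by positivity
  calc ∑ k ∈ Ioc j m, ρ ^ k ≤ ∑ k ∈ Ico j (m + 1), ρ ^ k :=
        sum_le_sum_of_subset_of_nonneg
          (fun k hk => by simp only [mem_Ioc, mem_Ico] at hk ⊢; omega)
          (fun k _ _ => pow_nonneg hρ0 k)
    _ ≤ ρ ^ j / (1 - ρ) := geom_sum_Ico_le_of_lt_one hρ0 hρ1
    _ ≤ (1 - ρ)⁻¹ / (j + 1) / (1 - ρ) := by
        gcongr
        rw [le_div_iff₀ hj, mul_comm]; exact succ_mul_pow_le_inv_one_sub hρ0 hρ1 j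
    _ = (1 - ρ)⁻¹ ^ 2 / (j + 1) := by ring
    _ ≤ (1 - ρ)⁻¹ ^ 2 / √(1 + q * j) := by
        refine div_le_div_of_nonneg_left (by positivity) (sqrt_pos.mpr (by positivity)) ?_
        rw [sqrt_le_left hj.le]
        nlinarith [(Nat.cast_nonneg j : (0 : ℝ) ≤ j)]

lemma abs_sum_Icc_sub_sum_Icc_le {ρ q a b : ℝ} (hρ0 : 0 ≤ ρ) (hρ1 : ρ < 1) (hq0 : 0 ≤ q)
    (hq1 : q ≤ 1) (ha : 0 ≤ a) (hb : 0 ≤ b) {e : ℕ → ℝ}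
    (he : ∀ k, 1 ≤ k →
      |e k| ≤ a * q * ρ ^ k + b * (q * (1 + q * ((k : ℝ) - 1)) ^ (-(3 : ℝ) / 2)))
    {j m : ℕ} (hjm : j ≤ m) :
    |∑ k ∈ Icc 1 m, e k - ∑ k ∈ Icc 1 j, e k| ≤ (a * q * (1 - ρ)⁻¹ ^ 2 + 4 * b) / √(1 + q * j) := by
  have htail : ∑ k ∈ Icc 1 m, e k - ∑ k ∈ Icc 1 j, e k = ∑ k ∈ Ioc j m, e k := by
    have hIcc : ∀ n, Icc 1 n = Ioc 0 n := Icc_add_one_left_eq_Ioc 0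
    rw [hIcc, hIcc, ← sum_Ioc_consecutive e (Nat.zero_le j) hjm, add_sub_cancel_left]
  calc |∑ k ∈ Icc 1 m, e k - ∑ k ∈ Icc 1 j, e k|
      ≤ ∑ k ∈ Ioc j m, (a * q * ρ ^ k + b * (q * (1 + q * ((k : ℝ) - 1)) ^ (-(3 : ℝ) / 2))) := by
        rw [htail]
        refine (abs_sum_le_sum_abs _ _).trans (sum_le_sum fun k hk => he k ?_)
        have := (mem_Ioc.mp hk).1
        omega
    _ = a * q * ∑ k ∈ Ioc j m, ρ ^ k
          + b * ∑ k ∈ Ioc j m, q * (1 + q * ((k : ℝ) - 1)) ^ (-(3 : ℝ) / 2) := by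
        rw [sum_add_distrib, mul_sum, mul_sum]
    _ ≤ a * q * ((1 - ρ)⁻¹ ^ 2 / √(1 + q * j)) + b * (4 / √(1 + q * j)) := by
        gcongr
        · exact sum_Ioc_pow_le hρ0 hρ1 hq0 hq1 j m
        · exact sum_Ioc_mul_rpow_neg_three_halves_le hq0 hq1 hjm
    _ = (a * q * (1 - ρ)⁻¹ ^ 2 + 4 * b) / √(1 + q * j) := by ring

lemma exists_forall_abs_sub_le_of_abs_sub_le {S B : ℕ → ℝ} (hB : Tendsto B atTop (𝓝 0))
    (h : ∀ j m, j ≤ m → |S m - S j| ≤ B j) : ∃ c, ∀ j, |c - S j| ≤ B j := by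
  have hS : CauchySeq S := cauchySeq_of_le_tendsto_0' B
    (fun j m hjm => by rw [dist_comm, Real.dist_eq]; exact h j m hjm) hB
  obtain ⟨c, hc⟩ := cauchySeq_tendsto_of_complete hS
  refine ⟨c, fun j => le_of_tendsto ((hc.sub_const (S j)).abs) ?_⟩
  filter_upwards [eventually_ge_atTop j] with m hm using h j m hm

lemma tendsto_div_sqrt_one_add_mul {q : ℝ} (hq : 0 < q) (D : ℝ) :
    Tendsto (fun j : ℕ => D / √(1 + q * j)) atTop (𝓝 0) :=
  tendsto_const_nhds.div_atTop <| tendsto_sqrt_atTop.comp <|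
    tendsto_atTop_add_const_left _ 1 (tendsto_natCast_atTop_atTop.const_mul_atTop hq)

section StepError

variable {κ C τ q₁ x ρ m : ℝ}

lemma abs_le_of_le_separatrix_bound (hC : 0 ≤ C) (hτ : 0 ≤ τ) (hq₁ : 0 ≤ q₁) (hx : 1 ≤ x)
    (hρ1 : ρ ≤ 1) (hm : |m| ≤ C * (q₁ / x * ρ + τ * q₁ * x ^ (-(3 : ℝ) / 2))) :
    |m| ≤ C * (1 + τ) * q₁ := by
  have h1 : q₁ / x * ρ ≤ q₁ :=
    (mul_le_of_le_one_right (by positivity) hρ1).trans (div_le_self hq₁ hx)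
  have h2 : x ^ (-(3 : ℝ) / 2) ≤ 1 := rpow_le_one_of_one_le_of_nonpos hx (by norm_num)
  calc |m| ≤ C * (q₁ / x * ρ + τ * q₁ * x ^ (-(3 : ℝ) / 2)) := hm
    _ ≤ C * (q₁ + τ * q₁ * 1) := by gcongr
    _ = C * (1 + τ) * q₁ := by ring

lemma abs_mul_div_add_le_half (hq₁ : 0 ≤ q₁) (hx : 1 ≤ x)
    (hsmall : q₁ * (1 + |κ| + C * (1 + τ)) ≤ 1 / 2) (hm : |m| ≤ C * (1 + τ) * q₁) :
    |κ * (q₁ / x) + m| ≤ 1 / 2 :=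
  calc |κ * (q₁ / x) + m| ≤ |κ| * q₁ + C * (1 + τ) * q₁ := by
        refine (abs_add_le _ _).trans (add_le_add ?_ hm)
        rw [abs_mul, abs_of_nonneg (by positivity : 0 ≤ q₁ / x)]
        gcongr
        exact div_le_self hq₁ hx
    _ ≤ 1 / 2 := by nlinarith

lemma abs_log_one_add_mul_div_add_sub_le (hC : 0 ≤ C) (hτ : 0 ≤ τ) (hq₁ : 0 ≤ q₁) (hx : 1 ≤ x)
    (hρ0 : 0 ≤ ρ) (hρ1 : ρ ≤ 1) (hsmall : q₁ * (1 + |κ| + C * (1 + τ)) ≤ 1 / 2)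
    (hm : |m| ≤ C * (q₁ / x * ρ + τ * q₁ * x ^ (-(3 : ℝ) / 2))) :
    |log (1 + κ * (q₁ / x) + m) - κ * log (1 + q₁ / x)|
      ≤ 3 * C * q₁ * ρ + (3 * C + 4 * κ ^ 2 + 2 * |κ|) * (q₁ + τ) * (q₁ * x ^ (-(3 : ℝ) / 2)) := by
  set w := x ^ (-(3 : ℝ) / 2)
  have hx0 : 0 < x := by linarith
  have hm' := abs_le_of_le_separatrix_bound hC hτ hq₁ hx hρ1 hm
  have hy := abs_mul_div_add_le_half hq₁ hx hsmall hm'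
  have hm_le : |m| ≤ C * q₁ * ρ + C * τ * (q₁ * w) := by
    have : q₁ / x * ρ ≤ q₁ * ρ := by gcongr; exact div_le_self hq₁ hx
    nlinarith
  have hsq : (q₁ / x) ^ 2 ≤ q₁ * (q₁ * w) := by
    have hsqrt : √x ≤ x := (sqrt_le_left (x := x) hx0.le).mpr (by nlinarith)
    calc (q₁ / x) ^ 2 = q₁ ^ 2 / (x * x) := by ring
      _ ≤ q₁ ^ 2 / (x * √x) := by gcongr
      _ = q₁ * (q₁ * w) := by rw [show w = (x * √x)⁻¹ from rpow_neg_three_halves hx0]; ring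
  have hm_half : |m| ≤ 1 / 2 := by nlinarith [mul_nonneg hq₁ (abs_nonneg κ)]
  calc |log (1 + κ * (q₁ / x) + m) - κ * log (1 + q₁ / x)|
      ≤ 3 * |m| + (4 * κ ^ 2 + 2 * |κ|) * (q₁ / x) ^ 2 :=
        abs_log_one_add_mul_add_sub_le (by linarith [(by positivity : 0 ≤ q₁ / x)])
          (by linarith [(abs_le.mp hy).1]) hm_half
    _ ≤ 3 * (C * q₁ * ρ + C * τ * (q₁ * w)) + (4 * κ ^ 2 + 2 * |κ|) * (q₁ * (q₁ * w)) := by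
        gcongr
    _ = 3 * C * q₁ * ρ + (3 * C + 4 * κ ^ 2 + 2 * |κ|) * (q₁ + τ) * (q₁ * w)
          - (3 * C * q₁ + (4 * κ ^ 2 + 2 * |κ|) * τ) * (q₁ * w) := by ring
    _ ≤ _ := sub_le_self _ (by positivity)

end StepError

lemma eq_mul_exp_of_log_succ {Z F Φ : ℕ → ℝ} (hF : ∀ j, 1 ≤ j → 0 < F j)
    (hZ : ∀ j, 1 ≤ j → Z (j + 1) = F j * Z j) (hΦ0 : Φ 0 = 0)
    (hΦ : ∀ j, Φ (j + 1) = Φ j + log (F (j + 1))) (j : ℕ) : Z (j + 1) = Z 1 * exp (Φ j) := by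
  induction j with
  | zero => simp [hΦ0]
  | succ j ih => rw [hZ (j + 1) (by omega), ih, hΦ, exp_add, exp_log (hF (j + 1) (by omega))]; ring

noncomputable def separatrix (q₁ : ℝ) (j : ℕ) : ℝ := q₁ / (1 + q₁ * ((j : ℝ) - 1))

noncomputable def logRemainder (κ q₁ : ℝ) (M : ℕ → ℝ) (k : ℕ) : ℝ :=
  log (1 + κ * separatrix q₁ k + M k) - κ * log (1 + separatrix q₁ k)

lemma log_one_add_separatrix_succ {q₁ : ℝ} (hq₁ : 0 ≤ q₁) (j : ℕ) :
    log (1 + separatrix q₁ (j + 1)) = log (1 + q₁ * ((j + 1 : ℕ) : ℝ)) - log (1 + q₁ * j) := by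
  have hj : (0 : ℝ) < 1 + q₁ * j := by positivity
  have h : 1 + separatrix q₁ (j + 1) = (1 + q₁ * ((j + 1 : ℕ) : ℝ)) / (1 + q₁ * j) := by
    rw [separatrix, Nat.cast_add_one, add_sub_cancel_right]
    field_simp
    ring
  rw [h, log_div (by positivity) hj.ne']

lemma flow_eq_closed_form {L q₁ κ : ℝ} (hL : 0 < L) (hq₁ : 0 ≤ q₁) {γ M Z : ℕ → ℝ}
    (ha : ∀ j, 1 ≤ j → 0 < 1 + κ * separatrix q₁ j + M j)
    (hZ : ∀ j, 1 ≤ j →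
      Z (j + 1) = L ^ 2 * exp (-π * γ j) * (1 + κ * separatrix q₁ j + M j) * Z j) (j : ℕ) :
    Z (j + 1) = Z 1 * L ^ (3 * (j : ℝ) / 2) * (1 + q₁ * j) ^ κ *
      exp ((-π * ∑ k ∈ Icc 1 j, (γ k - log L / (2 * π)))
        + ∑ k ∈ Icc 1 j, logRemainder κ q₁ M k) := by
  have hflow := eq_mul_exp_of_log_succ
    (F := fun j => L ^ 2 * exp (-π * γ j) * (1 + κ * separatrix q₁ j + M j))
    (Φ := fun j : ℕ => log L * (3 * (j : ℝ) / 2) + log (1 + q₁ * j) * κ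
      + ((-π * ∑ k ∈ Icc 1 j, (γ k - log L / (2 * π))) + ∑ k ∈ Icc 1 j, logRemainder κ q₁ M k))
    (fun j hj => mul_pos (mul_pos (pow_pos hL 2) (exp_pos _)) (ha j hj)) hZ (by simp)
    (fun j => ?_) j
  · rw [hflow, exp_add, exp_add, ← rpow_def_of_pos hL, ← rpow_def_of_pos (by positivity)]
    ring
  · have ha' := ha (j + 1) (by omega)
    rw [sum_Icc_succ_top (by omega), sum_Icc_succ_top (by omega), logRemainder,
      log_one_add_separatrix_succ hq₁, log_mul (by positivity) ha'.ne', log_mul (by positivity)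
      (by positivity), log_pow, log_exp]
    field_simp
    push_cast
    ring

section Remainder

variable {C τ κ q₁ ρ : ℝ} {M : ℕ → ℝ}

lemma one_le_one_add_mul_sub_one (hq₁ : 0 ≤ q₁) {k : ℕ} (hk : 1 ≤ k) :
    1 ≤ 1 + q₁ * ((k : ℝ) - 1) := by
  have : (1 : ℝ) ≤ k := by exact_mod_cast hk
  nlinarith

lemma one_add_mul_separatrix_add_pos (hC : 0 ≤ C) (hτ : 0 ≤ τ) (hq₁ : 0 ≤ q₁) (hρ0 : 0 ≤ ρ)
    (hρ1 : ρ ≤ 1) (hsmall : q₁ * (1 + |κ| + C * (1 + τ)) ≤ 1 / 2)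
    (hM : ∀ k, 1 ≤ k → |M k| ≤ C * (separatrix q₁ k * ρ ^ k
      + τ * q₁ * (1 + q₁ * ((k : ℝ) - 1)) ^ (-(3 : ℝ) / 2)))
    {k : ℕ} (hk : 1 ≤ k) : 0 < 1 + κ * separatrix q₁ k + M k := by
  have hx := one_le_one_add_mul_sub_one hq₁ hk
  have hy : |κ * separatrix q₁ k + M k| ≤ 1 / 2 := abs_mul_div_add_le_half hq₁ hx hsmall
    (abs_le_of_le_separatrix_bound hC hτ hq₁ hx (pow_le_one₀ hρ0 hρ1) (hM k hk))
  linarith [(abs_le.mp hy).1]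

lemma exists_forall_abs_sub_sum_logRemainder_le (hC : 0 ≤ C) (hτ : 0 ≤ τ) (hq₁ : 0 < q₁)
    (hρ0 : 0 ≤ ρ) (hρ1 : ρ < 1) (hsmall : q₁ * (1 + |κ| + C * (1 + τ)) ≤ 1 / 2)
    (hM : ∀ k, 1 ≤ k → |M k| ≤ C * (separatrix q₁ k * ρ ^ k
      + τ * q₁ * (1 + q₁ * ((k : ℝ) - 1)) ^ (-(3 : ℝ) / 2))) :
    ∃ c, ∀ j : ℕ, |c - ∑ k ∈ Icc 1 j, logRemainder κ q₁ M k|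
      ≤ (3 * C * (1 - ρ)⁻¹ ^ 2 + 4 * (3 * C + 4 * κ ^ 2 + 2 * |κ|) + 1) * (q₁ + τ)
        / √(1 + q₁ * j) := by
  set A := 3 * C + 4 * κ ^ 2 + 2 * |κ|
  have hq₁1 : q₁ ≤ 1 := by nlinarith [abs_nonneg κ, mul_nonneg hC hτ]
  have he : ∀ k : ℕ, 1 ≤ k → |logRemainder κ q₁ M k| ≤
      3 * C * q₁ * ρ ^ k + A * (q₁ + τ) * (q₁ * (1 + q₁ * ((k : ℝ) - 1)) ^ (-(3 : ℝ) / 2)) :=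
    fun k hk => abs_log_one_add_mul_div_add_sub_le hC hτ hq₁.le
      (one_le_one_add_mul_sub_one hq₁.le hk) (by positivity) (pow_le_one₀ hρ0 hρ1.le) hsmall
      (hM k hk)
  refine exists_forall_abs_sub_le_of_abs_sub_le (tendsto_div_sqrt_one_add_mul hq₁ _)
    fun j m hjm => (abs_sum_Icc_sub_sum_Icc_le hρ0 hρ1 hq₁.le hq₁1 (by positivity)
      (by positivity) he hjm).trans ?_
  have : 0 ≤ 3 * C * (1 - ρ)⁻¹ ^ 2 * τ := by positivity
  gcongr
  nlinarith

end Remainder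

theorem statement14_general (L c C τ κ : ℝ) (hL : 1 < L) (hC : 0 ≤ C) (hτ : 0 ≤ τ) :
    ∃ ε : ℝ, 0 < ε ∧ ∃ C' : ℝ, 0 < C' ∧
      ∀ q₁ : ℝ, 0 < q₁ → q₁ ≤ ε →
        ∀ γ M : ℕ → ℝ,
          (∀ j : ℕ, 1 ≤ j →
            |γ j - Real.log L / (2 * Real.pi)| ≤ c * L ^ (-(j : ℝ) / 4)) →
          (∀ j : ℕ, 1 ≤ j →
            |M j| ≤ C * (q₁ / (1 + q₁ * ((j : ℝ) - 1)) * L ^ (-(j : ℝ) / 4)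
              + τ * q₁ * (1 + q₁ * ((j : ℝ) - 1)) ^ (-(3 : ℝ) / 2))) →
          ∀ Z : ℕ → ℝ,
            (∀ j : ℕ, 1 ≤ j →
              Z (j + 1) = L ^ 2 * Real.exp (-Real.pi * γ j) *
                (1 + κ * (q₁ / (1 + q₁ * ((j : ℝ) - 1))) + M j) * Z j) →
            ∃ cκ : ℝ, |cκ| ≤ C' * (q₁ + τ) ∧
              ∃ r : ℕ → ℝ,
                (∀ j : ℕ, 1 ≤ j →
                  |r j| ≤ C' * (q₁ + τ) / Real.sqrt (1 + q₁ * ((j : ℝ) - 1))) ∧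
                ∀ j : ℕ, 1 ≤ j →
                  Z (j + 1) = Z 1 * L ^ (3 * (j : ℝ) / 2) * (1 + q₁ * j) ^ κ *
                    Real.exp
                      ((-Real.pi *
                          ∑ k ∈ Finset.Icc 1 j, (γ k - Real.log L / (2 * Real.pi)))
                        + cκ + r j) := by
  set ρ : ℝ := L ^ (-(1 : ℝ) / 4)
  have hρ0 : 0 < ρ := by positivity
  have hρ1 : ρ < 1 := rpow_lt_one_of_one_lt_of_neg hL (by norm_num)
  set D := 1 + |κ| + C * (1 + τ)
  refine ⟨(2 * D)⁻¹, by positivity,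
    3 * C * (1 - ρ)⁻¹ ^ 2 + 4 * (3 * C + 4 * κ ^ 2 + 2 * |κ|) + 1, by positivity, ?_⟩
  intro q₁ hq₁ hq₁ε γ M _ hM Z hZ
  have hsmall : q₁ * D ≤ 1 / 2 :=
    calc q₁ * D ≤ (2 * D)⁻¹ * D := by gcongr
      _ = 1 / 2 := by field_simp [show D ≠ 0 by positivity]
  have hMρ : ∀ k : ℕ, 1 ≤ k → |M k| ≤ C * (separatrix q₁ k * ρ ^ k
      + τ * q₁ * (1 + q₁ * ((k : ℝ) - 1)) ^ (-(3 : ℝ) / 2)) := fun k hk => by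
    rw [← rpow_natCast, ← rpow_mul (by positivity), show -(1 : ℝ) / 4 * k = -(k : ℝ) / 4 by ring]
    exact hM k hk
  obtain ⟨cκ, hcκ⟩ :=
    exists_forall_abs_sub_sum_logRemainder_le hC hτ hq₁ hρ0.le hρ1 hsmall hMρ
  refine ⟨cκ, by simpa using hcκ 0, fun j => ∑ k ∈ Icc 1 j, logRemainder κ q₁ M k - cκ,
    fun j hj => ?_, fun j _ => ?_⟩
  · rw [abs_sub_comm]
    refine (hcκ j).trans (div_le_div_of_nonneg_left (by positivity)
      (sqrt_pos.mpr (by linarith [one_le_one_add_mul_sub_one hq₁.le hj]))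
      (sqrt_le_sqrt (by linarith)))
  · rw [add_assoc, add_sub_cancel]
    exact flow_eq_closed_form (by positivity) hq₁.le
      (fun k hk => one_add_mul_separatrix_add_pos hC hτ hq₁.le hρ0.le hρ1.le hsmall hMρ hk) hZ j

/-- Asymptotic solution of the flow of a fractional-charge
renormalization constant at `α² = 8π`: if
`Z_{j+1} = L² e^{−πγ_j} (1 + κ q_j + M_j) Z_j` with `γ_j = (ln L)/(2π) + O(L^{−j/4})`
and `M_j` a separatrix-size error, then
`Z_{j+1} = Z₁ L^{3j/2} (1+q₁ j)^κ e^{g_j + c_κ + r_j}` with `|c_κ| ≤ C′(q₁+τ)` and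
`|r_j| ≤ C′(q₁+τ)/√(1+q₁(j−1))`. -/
theorem statement14 (L c C τ κ : ℝ) (hL : 1 < L) (hc : 0 ≤ c) (hC : 0 ≤ C) (hτ : 0 ≤ τ) :
    ∃ ε : ℝ, 0 < ε ∧ ∃ C' : ℝ, 0 < C' ∧
      ∀ q₁ : ℝ, 0 < q₁ → q₁ ≤ ε →
        ∀ γ M : ℕ → ℝ,
          (∀ j : ℕ, 1 ≤ j →
            |γ j - Real.log L / (2 * Real.pi)| ≤ c * L ^ (-(j : ℝ) / 4)) →
          (∀ j : ℕ, 1 ≤ j →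
            |M j| ≤ C * (q₁ / (1 + q₁ * ((j : ℝ) - 1)) * L ^ (-(j : ℝ) / 4)
              + τ * q₁ * (1 + q₁ * ((j : ℝ) - 1)) ^ (-(3 : ℝ) / 2))) →
          ∀ Z : ℕ → ℝ,
            (∀ j : ℕ, 1 ≤ j →
              Z (j + 1) = L ^ 2 * Real.exp (-Real.pi * γ j) *
                (1 + κ * (q₁ / (1 + q₁ * ((j : ℝ) - 1))) + M j) * Z j) →
            ∃ cκ : ℝ, |cκ| ≤ C' * (q₁ + τ) ∧
              ∃ r : ℕ → ℝ,
                (∀ j : ℕ, 1 ≤ j →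
                  |r j| ≤ C' * (q₁ + τ) / Real.sqrt (1 + q₁ * ((j : ℝ) - 1))) ∧
                ∀ j : ℕ, 1 ≤ j →
                  Z (j + 1) = Z 1 * L ^ (3 * (j : ℝ) / 2) * (1 + q₁ * j) ^ κ *
                    Real.exp
                      ((-Real.pi *
                          ∑ k ∈ Finset.Icc 1 j, (γ k - Real.log L / (2 * Real.pi)))
                        + cκ + r j) :=
  statement14_general L c C τ κ hL hC hτ
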